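/- arXiv:1201.2502 — 3 statements merged into one kernel-verified Lean document; each statement's English description precedes it below -/
import Mathlib

section
/- There exists a continuous function f : ℝ → ℝ taking values in [−1, 1] such that: (i) for every real X, ∫₀^X f(x) dx + f(0) = f(X/2); (ii) for every natural number n, f(2n+1) = u_n and f(2n) = 0; (iii) f(x) = 0 for every real x < 0; and (iv) |f(x)| = |f(x+2)| for every real x > 0. -/
/-!
The Fabius function `F` is continuous, vanishes on `(-∞, 0]`, equals `1` on `[1, ∞)` and satisfies
`F x = ∫_{2x-1}^{2x} F`. It is the limit of the iterates of this integral operator started at the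
ramp: the operator squared halves the sup-distance between two such functions, because after one
application their difference lies under a tent of mass `1 / 2`. Differentiating,
`F' x = 2 F (2x) - 2 F (2x - 1)`, so the bump `h x = F x - F (x - 1)`, supported on `[0, 2]`, has
`h' x = 2 h (2x) - 2 h (2x - 2)`. The recursion `u (2n) = u n`, `u (2n+1) = -u n` then turns this
into `f' x = 2 f (2x)` for `f x = ∑ u n * h (x - 2n)`, i.e. `X ↦ f (X / 2)` is a primitive of `f`.
-/

/-- The ±1 Thue–Morse sequence: `u n = (-1)^(s₂(n)+1)` where `s₂` is the binary digit sum. -/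
def u (n : ℕ) : ℤ := (-1) ^ ((Nat.digits 2 n).sum + 1)

open MeasureTheory Filter Set Topology

noncomputable section

theorem tendstoUniformly_of_dist_le {α : Type*} {F : ℕ → α → ℝ} {f : α → ℝ} {b : ℕ → ℝ}
    (hb : Tendsto b atTop (𝓝 0)) (h : ∀ k x, dist (F k x) (f x) ≤ b k) :
    TendstoUniformly F f atTop :=
  Metric.tendstoUniformly_iff.2 fun _ hε => (hb.eventually (gt_mem_nhds hε)).mono
    fun k hk x => (dist_comm (f x) (F k x) ▸ h k x).trans_lt hk

theorem Finset.sum_range_two_mul {M : Type*} [AddCommMonoid M] (g : ℕ → M) (N : ℕ) :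
    ∑ m ∈ range (2 * N), g m = ∑ n ∈ range N, (g (2 * n) + g (2 * n + 1)) := by
  induction N with
  | zero => simp
  | succ N ih => rw [mul_add_one, sum_range_succ, sum_range_succ, sum_range_succ, ih, add_assoc]

def ramp (x : ℝ) : ℝ := projIcc (0 : ℝ) 1 zero_le_one x

theorem continuous_ramp : Continuous ramp := continuous_subtype_val.comp continuous_projIcc

theorem monotone_ramp : Monotone ramp := fun _ _ h => monotone_projIcc zero_le_one h

theorem ramp_mem_Icc (x : ℝ) : ramp x ∈ Icc (0 : ℝ) 1 := (projIcc 0 1 zero_le_one x).2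

theorem ramp_of_nonpos {x : ℝ} (hx : x ≤ 0) : ramp x = 0 := by
  simp [ramp, projIcc_of_le_left _ hx]

theorem ramp_of_one_le {x : ℝ} (hx : 1 ≤ x) : ramp x = 1 := by
  simp [ramp, projIcc_of_right_le _ hx]

theorem ramp_of_mem_Icc {x : ℝ} (hx : x ∈ Icc (0 : ℝ) 1) : ramp x = x := by
  simp [ramp, projIcc_of_mem _ hx]

def fabiusOp (g : ℝ → ℝ) (x : ℝ) : ℝ := ∫ t in (2 * x - 1)..(2 * x), g t

section FabiusOp

variable {g h : ℝ → ℝ}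

theorem hasDerivAt_fabiusOp (hg : Continuous g) (x : ℝ) :
    HasDerivAt (fabiusOp g) (2 * g (2 * x) - 2 * g (2 * x - 1)) x := by
  have hP (y : ℝ) : HasDerivAt (fun y => ∫ t in (0 : ℝ)..y, g t) (g y) y :=
    (hg.integral_hasStrictDerivAt 0 y).hasDerivAt
  have hlin : HasDerivAt (fun y : ℝ => 2 * y) 2 x := by
    simpa using (hasDerivAt_id x).const_mul (2 : ℝ)
  have hdiff : fabiusOp g =
      fun y => (∫ t in (0 : ℝ)..2 * y, g t) - ∫ t in (0 : ℝ)..2 * y - 1, g t :=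
    funext fun y => (intervalIntegral.integral_interval_sub_left (hg.intervalIntegrable _ _)
      (hg.intervalIntegrable _ _)).symm
  rw [hdiff]
  exact (((hP _).comp x hlin).sub ((hP _).comp x (hlin.sub_const 1))).congr_deriv (by ring)

theorem continuous_fabiusOp (hg : Continuous g) : Continuous (fabiusOp g) :=
  continuous_iff_continuousAt.2 fun x => (hasDerivAt_fabiusOp hg x).continuousAt

theorem fabiusOp_sub (hg : Continuous g) (hh : Continuous h) :
    fabiusOp (g - h) = fabiusOp g - fabiusOp h :=
  funext fun _ => intervalIntegral.integral_sub (hg.intervalIntegrable _ _)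
    (hh.intervalIntegrable _ _)

theorem abs_fabiusOp_le {c : ℝ} (hc : ∀ t, |g t| ≤ c) (x : ℝ) : |fabiusOp g x| ≤ c := by
  simpa [fabiusOp] using intervalIntegral.norm_integral_le_of_norm_le_const
    (a := 2 * x - 1) (b := 2 * x) fun t _ => (Real.norm_eq_abs _).trans_le (hc t)

theorem fabiusOp_eq_const {c x : ℝ} (hg : ∀ t ∈ Icc (2 * x - 1) (2 * x), g t = c) :
    fabiusOp g x = c := by
  rw [fabiusOp, intervalIntegral.integral_congr (g := fun _ => c)]
  · simp
  · rwa [uIcc_of_le (by linarith)]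

theorem fabiusOp_mem_Icc {a b : ℝ} (hg : Continuous g) (hab : ∀ t, g t ∈ Icc a b) (x : ℝ) :
    fabiusOp g x ∈ Icc a b := by
  have hx : 2 * x - 1 ≤ 2 * x := by linarith
  constructor
  · simpa [fabiusOp] using intervalIntegral.integral_mono_on (μ := volume) hx
      intervalIntegrable_const (hg.intervalIntegrable _ _) fun t _ => (hab t).1
  · simpa [fabiusOp] using intervalIntegral.integral_mono_on (μ := volume) hx
      (hg.intervalIntegrable _ _) intervalIntegrable_const fun t _ => (hab t).2

end FabiusOp

structure IsUnitTransition (g : ℝ → ℝ) : Prop where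
  continuous : Continuous g
  mem_Icc : ∀ x, g x ∈ Icc (0 : ℝ) 1
  eq_zero_of_nonpos : ∀ x ≤ 0, g x = 0
  eq_one_of_one_le : ∀ x, 1 ≤ x → g x = 1

theorem isUnitTransition_ramp : IsUnitTransition ramp :=
  ⟨continuous_ramp, ramp_mem_Icc, fun _ => ramp_of_nonpos, fun _ => ramp_of_one_le⟩

section IsUnitTransition

variable {g h : ℝ → ℝ}

theorem isUnitTransition_fabiusOp (hg : IsUnitTransition g) :
    IsUnitTransition (fabiusOp g) where
  continuous := continuous_fabiusOp hg.continuous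
  mem_Icc := fabiusOp_mem_Icc hg.continuous hg.mem_Icc
  eq_zero_of_nonpos x hx :=
    fabiusOp_eq_const fun t ht => hg.eq_zero_of_nonpos t (by linarith [ht.2])
  eq_one_of_one_le x hx :=
    fabiusOp_eq_const fun t ht => hg.eq_one_of_one_le t (by linarith [ht.1])

theorem isUnitTransition_iterate_fabiusOp (hg : IsUnitTransition g) (n : ℕ) :
    IsUnitTransition (fabiusOp^[n] g) := by
  induction n with
  | zero => exact hg
  | succ n ih => rw [Function.iterate_succ_apply']; exact isUnitTransition_fabiusOp ih

theorem IsUnitTransition.sub_eq_zero_of_notMem_Ioo (hg : IsUnitTransition g)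
    (hh : IsUnitTransition h) {t : ℝ} (ht : t ∉ Ioo (0 : ℝ) 1) : g t - h t = 0 := by
  rcases le_or_gt t 0 with ht0 | ht0
  · rw [hg.eq_zero_of_nonpos t ht0, hh.eq_zero_of_nonpos t ht0, sub_zero]
  · have ht1 : 1 ≤ t := not_lt.1 fun ht1 => ht ⟨ht0, ht1⟩
    rw [hg.eq_one_of_one_le t ht1, hh.eq_one_of_one_le t ht1, sub_self]

end IsUnitTransition

section Contraction

variable {D : ℝ → ℝ}

theorem integral_eq_integral_ramp (hDc : Continuous D) (hD : ∀ t ∉ Ioo (0 : ℝ) 1, D t = 0)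
    (a b : ℝ) : ∫ t in a..b, D t = ∫ t in ramp a..ramp b, D t := by
  have hshift (y : ℝ) : ∫ t in y..ramp y, D t = 0 := by
    rcases le_or_gt y 0 with hy0 | hy0
    · rw [ramp_of_nonpos hy0, intervalIntegral.integral_congr (g := fun _ => 0)]
      · simp
      · intro t ht
        rw [uIcc_of_le hy0] at ht
        exact hD t fun h => h.1.not_ge ht.2
    rcases le_or_gt 1 y with hy1 | hy1
    · rw [ramp_of_one_le hy1, intervalIntegral.integral_congr (g := fun _ => 0)]
      · simp
      · intro t ht
        rw [uIcc_of_ge hy1] at ht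
        exact hD t fun h => h.2.not_ge ht.1
    · rw [ramp_of_mem_Icc ⟨hy0.le, hy1.le⟩, intervalIntegral.integral_same]
  have := intervalIntegral.integral_interval_sub_interval_comm (μ := volume)
    (hDc.intervalIntegrable a b) (hDc.intervalIntegrable (ramp a) (ramp b))
    (hDc.intervalIntegrable a (ramp a))
  rwa [hshift, hshift, sub_self, sub_eq_zero] at this

theorem abs_fabiusOp_le_mul_window (hDc : Continuous D) (hD : ∀ t ∉ Ioo (0 : ℝ) 1, D t = 0)
    {c : ℝ} (hc : ∀ t, |D t| ≤ c) (x : ℝ) :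
    |fabiusOp D x| ≤ c * (ramp (2 * x) - ramp (2 * x - 1)) := by
  have hmono : ramp (2 * x - 1) ≤ ramp (2 * x) := monotone_ramp (by linarith)
  rw [fabiusOp, integral_eq_integral_ramp hDc hD, ← abs_of_nonneg (sub_nonneg.2 hmono)]
  simpa using intervalIntegral.norm_integral_le_of_norm_le_const
    fun t _ => (Real.norm_eq_abs (D t)).trans_le (hc t)

theorem integral_ramp_window_le (a : ℝ) :
    ∫ t in a..a + 1, (ramp (2 * t) - ramp (2 * t - 1)) ≤ 1 / 2 := by
  -- after a shift by `1 / 2` the integral is `∫_{a+1/2}^{a+1} r - ∫_{a-1/2}^{a} r` with `0 ≤ r ≤ 1`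
  set r : ℝ → ℝ := fun t => ramp (2 * t)
  have hr : Continuous r := continuous_ramp.comp (continuous_const.mul continuous_id)
  have hr' : Continuous fun t => ramp (2 * t - 1) :=
    continuous_ramp.comp ((continuous_const.mul continuous_id).sub continuous_const)
  have hshift : ∫ t in a..a + 1, ramp (2 * t - 1) = ∫ t in a - 1 / 2..a + 1 / 2, r t :=
    calc ∫ t in a..a + 1, ramp (2 * t - 1) = ∫ t in a..a + 1, r (t - 1 / 2) := by
          congr 1 with t
          simp only [r]
          ring_nf
      _ = _ := by rw [intervalIntegral.integral_comp_sub_right]; ring_nf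
  have hsplit := intervalIntegral.integral_interval_sub_interval_comm (μ := volume)
    (hr.intervalIntegrable a (a + 1)) (hr.intervalIntegrable (a - 1 / 2) (a + 1 / 2))
    (hr.intervalIntegrable a (a - 1 / 2))
  rw [intervalIntegral.integral_symm (a - 1 / 2) a,
    intervalIntegral.integral_symm (a + 1 / 2) (a + 1)] at hsplit
  have hupper : ∫ t in a + 1 / 2..a + 1, r t ≤ 1 / 2 :=
    calc ∫ t in a + 1 / 2..a + 1, r t ≤ ∫ _ in a + 1 / 2..a + 1, (1 : ℝ) :=
          intervalIntegral.integral_mono_on (by linarith) (hr.intervalIntegrable _ _)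
            intervalIntegrable_const fun t _ => (ramp_mem_Icc (2 * t)).2
      _ = 1 / 2 := by simp only [intervalIntegral.integral_const, smul_eq_mul]; ring
  have hlower : 0 ≤ ∫ t in a - 1 / 2..a, r t :=
    intervalIntegral.integral_nonneg (by linarith) fun t _ => (ramp_mem_Icc (2 * t)).1
  rw [intervalIntegral.integral_sub (hr.intervalIntegrable _ _) (hr'.intervalIntegrable _ _),
    hshift]
  linarith

theorem abs_fabiusOp_fabiusOp_le (hDc : Continuous D) (hD : ∀ t ∉ Ioo (0 : ℝ) 1, D t = 0)
    {c : ℝ} (hc : ∀ t, |D t| ≤ c) (x : ℝ) : |fabiusOp (fabiusOp D) x| ≤ c / 2 := by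
  have hc0 : 0 ≤ c := (abs_nonneg _).trans (hc 0)
  have hx : 2 * x - 1 ≤ 2 * x := by linarith
  have hwindow : Continuous fun t => c * (ramp (2 * t) - ramp (2 * t - 1)) :=
    continuous_const.mul ((continuous_ramp.comp (continuous_const.mul continuous_id)).sub
      (continuous_ramp.comp ((continuous_const.mul continuous_id).sub continuous_const)))
  calc |fabiusOp (fabiusOp D) x|
      ≤ ∫ t in (2 * x - 1)..(2 * x), |fabiusOp D t| :=
        intervalIntegral.abs_integral_le_integral_abs hx
    _ ≤ ∫ t in (2 * x - 1)..(2 * x), c * (ramp (2 * t) - ramp (2 * t - 1)) :=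
        intervalIntegral.integral_mono_on hx
          ((continuous_fabiusOp hDc).abs.intervalIntegrable _ _) (hwindow.intervalIntegrable _ _)
          fun t _ => abs_fabiusOp_le_mul_window hDc hD hc t
    _ ≤ c * (1 / 2) := by
        rw [intervalIntegral.integral_const_mul]
        gcongr
        simpa using integral_ramp_window_le (2 * x - 1)
    _ = c / 2 := by ring

end Contraction

section IsUnitTransition

variable {g h : ℝ → ℝ}

theorem IsUnitTransition.abs_fabiusOp_fabiusOp_sub_le (hg : IsUnitTransition g)
    (hh : IsUnitTransition h) {c : ℝ} (hc : ∀ t, |g t - h t| ≤ c) (x : ℝ) :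
    |fabiusOp (fabiusOp g) x - fabiusOp (fabiusOp h) x| ≤ c / 2 := by
  rw [← Pi.sub_apply (fabiusOp (fabiusOp g)),
    ← fabiusOp_sub (isUnitTransition_fabiusOp hg).continuous
      (isUnitTransition_fabiusOp hh).continuous,
    ← fabiusOp_sub hg.continuous hh.continuous]
  exact abs_fabiusOp_fabiusOp_le (hg.continuous.sub hh.continuous)
    (fun t ht => hg.sub_eq_zero_of_notMem_Ioo hh ht) hc x

theorem IsUnitTransition.abs_iterate_fabiusOp_sub_le (hg : IsUnitTransition g)
    (hh : IsUnitTransition h) (k : ℕ) (x : ℝ) :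
    |fabiusOp^[2 * k] g x - fabiusOp^[2 * k] h x| ≤ (1 / 2) ^ k := by
  induction k generalizing x with
  | zero =>
      simpa using abs_sub_le_of_nonneg_of_le (hg.mem_Icc x).1 (hg.mem_Icc x).2
        (hh.mem_Icc x).1 (hh.mem_Icc x).2
  | succ k ih =>
      rw [mul_add_one, Function.iterate_succ_apply', Function.iterate_succ_apply',
        Function.iterate_succ_apply', Function.iterate_succ_apply', pow_succ,
        ← div_eq_mul_one_div]
      exact (isUnitTransition_iterate_fabiusOp hg _).abs_fabiusOp_fabiusOp_sub_le
        (isUnitTransition_iterate_fabiusOp hh _) ih x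

end IsUnitTransition

def fabiusApprox (k : ℕ) : ℝ → ℝ := fabiusOp^[2 * k] ramp

theorem isUnitTransition_fabiusApprox (k : ℕ) : IsUnitTransition (fabiusApprox k) :=
  isUnitTransition_iterate_fabiusOp isUnitTransition_ramp _

theorem dist_fabiusApprox_succ_le (k : ℕ) (x : ℝ) :
    dist (fabiusApprox k x) (fabiusApprox (k + 1) x) ≤ (1 / 2) ^ k := by
  rw [fabiusApprox, fabiusApprox, mul_add_one, Function.iterate_add_apply, Real.dist_eq]
  exact isUnitTransition_ramp.abs_iterate_fabiusOp_sub_le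
    (isUnitTransition_iterate_fabiusOp isUnitTransition_ramp 2) k x

theorem dist_fabiusApprox_fabiusOp_le (k : ℕ) (x : ℝ) :
    dist (fabiusApprox k x) (fabiusOp (fabiusApprox k) x) ≤ (1 / 2) ^ k := by
  rw [fabiusApprox, ← Function.iterate_succ_apply' fabiusOp, Function.iterate_succ_apply,
    Real.dist_eq]
  exact isUnitTransition_ramp.abs_iterate_fabiusOp_sub_le
    (isUnitTransition_fabiusOp isUnitTransition_ramp) k x

/-- The Fabius function. -/
def fabius (x : ℝ) : ℝ := limUnder atTop fun k => fabiusApprox k x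

theorem tendsto_fabiusApprox (x : ℝ) :
    Tendsto (fabiusApprox · x) atTop (𝓝 (fabius x)) :=
  (cauchySeq_of_le_geometric (1 / 2) 1 (by norm_num)
    fun k => by simpa using dist_fabiusApprox_succ_le k x).tendsto_limUnder

theorem dist_fabiusApprox_fabius_le (k : ℕ) (x : ℝ) :
    dist (fabiusApprox k x) (fabius x) ≤ 2 * (1 / 2) ^ k := by
  have := dist_le_of_le_geometric_of_tendsto (1 / 2) 1 (by norm_num)
    (fun k => by simpa using dist_fabiusApprox_succ_le k x) (tendsto_fabiusApprox x) k
  norm_num at this ⊢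
  linarith

theorem tendsto_two_mul_half_pow :
    Tendsto (fun k : ℕ => 2 * (1 / 2 : ℝ) ^ k) atTop (𝓝 0) := by
  simpa using (tendsto_pow_atTop_nhds_zero_of_lt_one (by norm_num : (0 : ℝ) ≤ 1 / 2)
    (by norm_num)).const_mul 2

theorem isUnitTransition_fabius : IsUnitTransition fabius where
  continuous := (tendstoUniformly_of_dist_le tendsto_two_mul_half_pow
    dist_fabiusApprox_fabius_le).continuous
      (Frequently.of_forall fun k => (isUnitTransition_fabiusApprox k).continuous)
  mem_Icc x := isClosed_Icc.mem_of_tendsto (tendsto_fabiusApprox x)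
    (Eventually.of_forall fun k => (isUnitTransition_fabiusApprox k).mem_Icc x)
  eq_zero_of_nonpos x hx := tendsto_nhds_unique (tendsto_fabiusApprox x)
    (tendsto_const_nhds.congr fun k =>
      ((isUnitTransition_fabiusApprox k).eq_zero_of_nonpos x hx).symm)
  eq_one_of_one_le x hx := tendsto_nhds_unique (tendsto_fabiusApprox x)
    (tendsto_const_nhds.congr fun k =>
      ((isUnitTransition_fabiusApprox k).eq_one_of_one_le x hx).symm)

theorem fabiusOp_fabius : fabiusOp fabius = fabius := by
  funext x
  have hlim : Tendsto (fun k => fabiusOp (fabiusApprox k) x) atTop (𝓝 (fabiusOp fabius x)) := by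
    refine tendsto_iff_dist_tendsto_zero.2 (squeeze_zero (fun _ => dist_nonneg)
      (fun k => ?_) tendsto_two_mul_half_pow)
    rw [Real.dist_eq, ← Pi.sub_apply (fabiusOp _), ← fabiusOp_sub
      (isUnitTransition_fabiusApprox k).continuous isUnitTransition_fabius.continuous]
    exact abs_fabiusOp_le (fun t => (Real.dist_eq _ _).symm.trans_le
      (dist_fabiusApprox_fabius_le k t)) x
  refine tendsto_nhds_unique hlim ((tendsto_fabiusApprox x).congr_dist ?_)
  exact squeeze_zero (fun _ => dist_nonneg) (dist_fabiusApprox_fabiusOp_le · x)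
    (tendsto_pow_atTop_nhds_zero_of_lt_one (by norm_num) (by norm_num))

theorem hasDerivAt_fabius (x : ℝ) :
    HasDerivAt fabius (2 * fabius (2 * x) - 2 * fabius (2 * x - 1)) x := by
  simpa only [fabiusOp_fabius] using hasDerivAt_fabiusOp isUnitTransition_fabius.continuous x

def fabiusBump (x : ℝ) : ℝ := fabius x - fabius (x - 1)

theorem fabiusBump_of_nonpos {x : ℝ} (hx : x ≤ 0) : fabiusBump x = 0 := by
  rw [fabiusBump, isUnitTransition_fabius.eq_zero_of_nonpos x hx,
    isUnitTransition_fabius.eq_zero_of_nonpos _ (by linarith), sub_zero]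

theorem fabiusBump_of_two_le {x : ℝ} (hx : 2 ≤ x) : fabiusBump x = 0 := by
  rw [fabiusBump, isUnitTransition_fabius.eq_one_of_one_le x (by linarith),
    isUnitTransition_fabius.eq_one_of_one_le _ (by linarith), sub_self]

theorem fabiusBump_one : fabiusBump 1 = 1 := by
  rw [fabiusBump, isUnitTransition_fabius.eq_one_of_one_le 1 le_rfl, sub_self,
    isUnitTransition_fabius.eq_zero_of_nonpos 0 le_rfl, sub_zero]

theorem abs_fabiusBump_le (x : ℝ) : |fabiusBump x| ≤ 1 :=
  abs_sub_le_of_nonneg_of_le (isUnitTransition_fabius.mem_Icc x).1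
    (isUnitTransition_fabius.mem_Icc x).2 (isUnitTransition_fabius.mem_Icc (x - 1)).1
    (isUnitTransition_fabius.mem_Icc (x - 1)).2

theorem hasDerivAt_fabiusBump (x : ℝ) :
    HasDerivAt fabiusBump (2 * fabiusBump (2 * x) - 2 * fabiusBump (2 * x - 2)) x := by
  refine ((hasDerivAt_fabius x).sub
    ((hasDerivAt_fabius (x - 1)).comp_sub_const x 1)).congr_deriv ?_
  simp only [fabiusBump]
  ring_nf

def bumpSeries (a : ℕ → ℝ) (x : ℝ) : ℝ := ∑' n : ℕ, a n * fabiusBump (x - 2 * n)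

section BumpSeries

variable {a : ℕ → ℝ}

theorem bumpSeries_eq_sum {N : ℕ} {x : ℝ} (hx : x ≤ 2 * N) :
    bumpSeries a x = ∑ n ∈ Finset.range N, a n * fabiusBump (x - 2 * n) := by
  refine tsum_eq_sum fun m hm => ?_
  have : (N : ℝ) ≤ m := by exact_mod_cast not_lt.1 (Finset.mem_range.not.1 hm)
  rw [fabiusBump_of_nonpos (by linarith), mul_zero]

theorem bumpSeries_of_nonpos {x : ℝ} (hx : x ≤ 0) : bumpSeries a x = 0 := by
  simpa using bumpSeries_eq_sum (a := a) (N := 0) (by simpa using hx)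

theorem bumpSeries_eq_of_mem_Icc {n : ℕ} {x : ℝ} (hx : x ∈ Icc (2 * n : ℝ) (2 * n + 2)) :
    bumpSeries a x = a n * fabiusBump (x - 2 * n) := by
  refine tsum_eq_single n fun m hm => ?_
  rcases hm.lt_or_gt with hlt | hgt
  · have : (m : ℝ) + 1 ≤ n := by exact_mod_cast hlt
    rw [fabiusBump_of_two_le (by linarith [hx.1]), mul_zero]
  · have : (n : ℝ) + 1 ≤ m := by exact_mod_cast hgt
    rw [fabiusBump_of_nonpos (by linarith [hx.2]), mul_zero]

theorem bumpSeries_eq_floor {x : ℝ} (hx : 0 ≤ x) :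
    bumpSeries a x = a ⌊x / 2⌋₊ * fabiusBump (x - 2 * ⌊x / 2⌋₊) := by
  have h₁ := Nat.floor_le (div_nonneg hx zero_le_two)
  have h₂ := Nat.lt_floor_add_one (x / 2)
  exact bumpSeries_eq_of_mem_Icc ⟨by linarith, by linarith⟩

theorem abs_bumpSeries_le (ha : ∀ n, |a n| ≤ 1) (x : ℝ) : |bumpSeries a x| ≤ 1 := by
  rcases le_total x 0 with hx | hx
  · simp [bumpSeries_of_nonpos hx]
  · rw [bumpSeries_eq_floor hx, abs_mul]
    exact mul_le_one₀ (ha _) (abs_nonneg _) (abs_fabiusBump_le _)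

theorem abs_bumpSeries_add_two (ha : ∀ n, |a (n + 1)| = |a n|) {x : ℝ} (hx : 0 ≤ x) :
    |bumpSeries a (x + 2)| = |bumpSeries a x| := by
  have hfloor : ⌊(x + 2) / 2⌋₊ = ⌊x / 2⌋₊ + 1 := by
    rw [add_div, div_self two_ne_zero, Nat.floor_add_one (div_nonneg hx zero_le_two)]
  rw [bumpSeries_eq_floor hx, bumpSeries_eq_floor (by linarith), hfloor, abs_mul, abs_mul, ha]
  push_cast
  ring_nf

/-- The derivative of the `n`-th bump splits into the bumps of indices `2n` and `2n+1` at `2y`,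
whose coefficients are `a n` and `-a n`. -/
theorem hasDerivAt_bumpSeries (ha₀ : ∀ n, a (2 * n) = a n) (ha₁ : ∀ n, a (2 * n + 1) = -a n)
    (y : ℝ) : HasDerivAt (bumpSeries a) (2 * bumpSeries a (2 * y)) y := by
  obtain ⟨N, hN⟩ := exists_nat_gt y
  have hnear : bumpSeries a =ᶠ[𝓝 y]
      fun x => ∑ n ∈ Finset.range N, a n * fabiusBump (x - 2 * n) := by
    filter_upwards [Iio_mem_nhds hN] with x (hx : x < N)
    exact bumpSeries_eq_sum (by linarith [(N.cast_nonneg : (0 : ℝ) ≤ N)])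
  have hsum := HasDerivAt.fun_sum fun n (_ : n ∈ Finset.range N) =>
    ((hasDerivAt_fabiusBump (y - 2 * n)).comp_sub_const y (2 * n)).const_mul (a n)
  refine (hsum.congr_of_eventuallyEq hnear).congr_deriv ?_
  rw [bumpSeries_eq_sum (N := 2 * N) (by push_cast; linarith), Finset.sum_range_two_mul,
    Finset.mul_sum]
  refine Finset.sum_congr rfl fun n _ => ?_
  rw [ha₀, ha₁]
  push_cast
  ring_nf

end BumpSeries

theorem integral_eq_sub_of_hasDerivAt_two_mul {f : ℝ → ℝ}
    (hf : ∀ y, HasDerivAt f (2 * f (2 * y)) y) (a b : ℝ) :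
    ∫ x in a..b, f x = f (b / 2) - f (a / 2) := by
  have hcont : Continuous f := continuous_iff_continuousAt.2 fun y => (hf y).continuousAt
  refine intervalIntegral.integral_eq_sub_of_hasDerivAt (f := fun x => f (x / 2))
    (fun x _ => ?_) (hcont.intervalIntegrable _ _)
  refine ((hf (x / 2)).comp x ((hasDerivAt_id x).div_const 2)).congr_deriv ?_
  field_simp

theorem u_two_mul (n : ℕ) : u (2 * n) = u n := by
  rcases Nat.eq_zero_or_pos n with rfl | hn
  · rfl
  · rw [u, u, Nat.digits_def' one_lt_two (by omega), Nat.mul_mod_right,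
      Nat.mul_div_cancel_left _ two_pos, List.sum_cons, zero_add]

theorem u_two_mul_add_one (n : ℕ) : u (2 * n + 1) = -u n := by
  rw [u, u, Nat.digits_def' one_lt_two (by omega), show (2 * n + 1) % 2 = 1 by omega,
    show (2 * n + 1) / 2 = n by omega, List.sum_cons, add_comm 1, pow_succ]
  ring

theorem abs_u (n : ℕ) : |(u n : ℝ)| = 1 := by
  simp [u]

end

theorem exists_thue_morse_solution :
    ∃ f : ℝ → ℝ, Continuous f ∧ (∀ x : ℝ, f x ∈ Set.Icc (-1 : ℝ) 1) ∧
      (∀ X : ℝ, (∫ x in (0 : ℝ)..X, f x) + f 0 = f (X / 2)) ∧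
      (∀ n : ℕ, f (2 * n + 1) = (u n : ℝ) ∧ f (2 * n) = 0) ∧
      (∀ x : ℝ, x < 0 → f x = 0) ∧
      (∀ x : ℝ, 0 < x → |f x| = |f (x + 2)|) := by
  have hderiv (y : ℝ) : HasDerivAt (bumpSeries fun n => (u n : ℝ))
      (2 * bumpSeries (fun n => (u n : ℝ)) (2 * y)) y :=
    hasDerivAt_bumpSeries (fun n => by rw [u_two_mul])
      (fun n => by rw [u_two_mul_add_one, Int.cast_neg]) y
  refine ⟨bumpSeries fun n => (u n : ℝ),
    continuous_iff_continuousAt.2 fun y => (hderiv y).continuousAt,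
    fun x => abs_le.1 (abs_bumpSeries_le (fun n => (abs_u n).le) x), fun X => ?_,
    fun n => ⟨?_, ?_⟩, fun x hx => bumpSeries_of_nonpos hx.le,
    fun x hx => (abs_bumpSeries_add_two (fun n => by rw [abs_u, abs_u]) hx.le).symm⟩
  · rw [integral_eq_sub_of_hasDerivAt_two_mul hderiv, zero_div, sub_add_cancel]
  · rw [bumpSeries_eq_of_mem_Icc (n := n) ⟨by linarith, by linarith⟩, add_sub_cancel_left,
      fabiusBump_one, mul_one]
  · rw [bumpSeries_eq_of_mem_Icc (n := n) ⟨le_rfl, by linarith⟩, sub_self,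
      fabiusBump_of_nonpos le_rfl, mul_zero]
end

section
/- For every integer n ≥ 1, the finite sequence l ↦ −Σ^l_{n+1} is nondecreasing for l ∈ {0, 1, …, 2^n}: that is, for every l with 0 ≤ l < 2^n, one has −Σ^{l}_{n+1} ≤ −Σ^{l+1}_{n+1}. -/
/-- The "Pascal triangle" associated to the Thue–Morse sequence:
`Sig k n` is `Σ^k_n` (k the superscript, n the subscript). -/
def Sig : ℕ → ℕ → ℤ
  | k, 0 => u k
  | 0, _ + 1 => 0
  | k + 1, n + 1 => Sig k n + Sig k (n + 1)

/-! Summing the defining recursion along a row gives `Σ^k_{n+1} = ∑_{j<k} Σ^j_n`. Since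
`u_{2^m + k} = -u_k` for `k < 2^m`, induction on `n` shows that `j ↦ Σ^j_n` is antiperiodic
with antiperiod `2^m` on `[0, 2^{m+1})` whenever `n ≤ m`; in particular it sums to zero over
`[0, 2^{m+1})`. This yields `Σ^l_n ≤ 0` for `l ≤ 2^n`: on the second half of the range,
`Σ^{2^n + r}_{n+1} = ∑_{r ≤ j < 2^n} Σ^j_n`. The theorem follows from
`Σ^{l+1}_{n+1} - Σ^l_{n+1} = Σ^l_n ≤ 0`. -/

open Finset

/-- The binary expansion of `2 ^ m + k` is that of `k`, padded with zeros, followed by a `1`. -/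
lemma digits_two_sum_two_pow_add {k m : ℕ} (hk : k < 2 ^ m) :
    (Nat.digits 2 (2 ^ m + k)).sum = (Nat.digits 2 k).sum + 1 := by
  have hlen : (Nat.digits 2 k).length ≤ m := (Nat.digits_length_le_iff one_lt_two k).2 hk
  have h := Nat.digits_append_zeroes_append_digits (b := 2) (n := k) (m := 1)
    (k := m - (Nat.digits 2 k).length) one_lt_two one_pos
  rw [Nat.add_sub_cancel' hlen, mul_one] at h
  rw [add_comm, ← h]
  simp

lemma u_two_pow_add {k m : ℕ} (hk : k < 2 ^ m) : u (2 ^ m + k) = -u k := by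
  rw [u, u, digits_two_sum_two_pow_add hk, pow_succ (-1 : ℤ) (_ + 1), mul_neg_one]

lemma sig_succ_eq_sum_range (k n : ℕ) : Sig k (n + 1) = ∑ j ∈ range k, Sig j n := by
  induction k with
  | zero => rfl
  | succ k ih => rw [sum_range_succ, ← ih, Sig, add_comm]

lemma sig_add_succ_of_neg {a k n : ℕ} (h : ∀ j < k, Sig (a + j) n = -Sig j n) :
    Sig (a + k) (n + 1) = Sig a (n + 1) - Sig k (n + 1) := by
  simp_rw [sig_succ_eq_sum_range, sum_range_add]
  rw [sum_congr rfl fun j hj => h j (mem_range.1 hj), sum_neg_distrib, sub_eq_add_neg]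

lemma sig_two_pow_add {n m k : ℕ} (hnm : n ≤ m) (hk : k < 2 ^ m) :
    Sig (2 ^ m + k) n = -Sig k n := by
  induction n generalizing m k with
  | zero => simpa only [Sig] using u_two_pow_add hk
  | succ n ih =>
    obtain ⟨m, rfl⟩ : ∃ m', m = m' + 1 := ⟨m - 1, by omega⟩
    have hblock : Sig (2 ^ (m + 1)) (n + 1) = 0 := by
      rw [pow_succ, mul_two, sig_add_succ_of_neg fun j hj => ih (by omega) hj, sub_self]
    rw [sig_add_succ_of_neg fun j hj => ih (by omega) (hj.trans hk), hblock, zero_sub]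

lemma sig_nonpos {n l : ℕ} (hn : 1 ≤ n) (hl : l ≤ 2 ^ n) : Sig l n ≤ 0 := by
  induction n, hn using Nat.le_induction generalizing l with
  | base => interval_cases l <;> decide
  | succ n _ ih =>
    rcases le_or_gt l (2 ^ n) with hl' | hl'
    · rw [sig_succ_eq_sum_range]
      exact sum_nonpos fun j hj => ih ((mem_range.1 hj).le.trans hl')
    · obtain ⟨r, rfl⟩ : ∃ r, l = 2 ^ n + r := ⟨l - 2 ^ n, by omega⟩
      have hr : r ≤ 2 ^ n := by rw [pow_succ] at hl; omega
      rw [sig_add_succ_of_neg fun j hj => sig_two_pow_add le_rfl (by omega),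
        sig_succ_eq_sum_range, sig_succ_eq_sum_range, ← sum_Ico_eq_sub _ hr]
      exact sum_nonpos fun j hj => ih (mem_Ico.1 hj).2.le

theorem sig_column_monotone (n : ℕ) (hn : 1 ≤ n) (l : ℕ) (hl : l < 2 ^ n) :
    -Sig l (n + 1) ≤ -Sig (l + 1) (n + 1) := by
  have hstep : Sig (l + 1) (n + 1) = Sig l n + Sig l (n + 1) := rfl
  linarith [sig_nonpos hn hl.le]
end

section
/- If f, g : ℝ → ℝ are continuous, both satisfy the equation ∫₀^X h(x) dx + h(0) = h(X/2) for every real X (with h = f and h = g respectively), and there exists ε > 0 such that f(x) = g(x) for all x ∈ (−ε, ε), then f = g on all of ℝ. -/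
/-!
The difference `d = f - g` is continuous, and subtracting the two equations at `X = 2y` gives
`d y = ∫₀^{2y} d` (the constant terms cancel because `f 0 = g 0`). Hence `d` is differentiable
with `d' y = 2 d (2y)`. If `d` vanishes on `(-r, r)`, then `d' = 0` there, so `d` vanishes on
`(-2r, 2r)`; doubling the interval indefinitely shows `d = 0`.
-/

open Metric

theorem hasDerivAt_of_eq_integral_mul {d : ℝ → ℝ} (hd : Continuous d) {c : ℝ}
    (hself : ∀ y, d y = ∫ t in (0 : ℝ)..c * y, d t) (y : ℝ) :
    HasDerivAt d (c * d (c * y)) y := by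
  have hmul : HasDerivAt (fun y => c * y) c y := by
    simpa using (hasDerivAt_id y).const_mul c
  have hint : HasDerivAt (fun y => ∫ t in (0 : ℝ)..c * y, d t) (d (c * y) * c) y :=
    (hd.integral_hasStrictDerivAt 0 (c * y)).hasDerivAt.comp y hmul
  rw [mul_comm]
  exact hint.congr_of_eventuallyEq (Filter.Eventually.of_forall hself)

theorem eq_zero_on_ball_mul_of_hasDerivAt {d : ℝ → ℝ} {c r : ℝ} (hc : c ≠ 0)
    (hd : ∀ y, HasDerivAt d (c * d (c * y)) y) (h0 : ∀ x ∈ ball (0 : ℝ) r, d x = 0) :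
    ∀ x ∈ ball (0 : ℝ) (|c| * r), d x = 0 := by
  intro x hx
  have hxc : x / c ∈ ball (0 : ℝ) r := by
    rw [mem_ball_zero_iff, Real.norm_eq_abs, abs_div, div_lt_iff₀ (abs_pos.2 hc), mul_comm]
    simpa using hx
  -- `d` vanishes near `x / c`, so its derivative `c * d x` there is zero
  have hderiv : HasDerivAt d 0 (x / c) :=
    (hasDerivAt_const _ _).congr_of_eventuallyEq
      (Filter.eventually_of_mem (isOpen_ball.mem_nhds hxc) h0)
  have hcd : c * d x = 0 := by
    simpa only [mul_div_cancel₀ x hc] using (hd (x / c)).unique hderiv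
  exact (mul_eq_zero.1 hcd).resolve_left hc

theorem eq_zero_of_hasDerivAt_of_eq_zero_on_ball {d : ℝ → ℝ} {c r : ℝ}
    (hc : 1 < |c|) (hr : 0 < r)
    (hd : ∀ y, HasDerivAt d (c * d (c * y)) y) (h0 : ∀ x ∈ ball (0 : ℝ) r, d x = 0) :
    d = 0 := by
  have hc0 : c ≠ 0 := abs_pos.1 (one_pos.trans hc)
  have hball : ∀ n : ℕ, ∀ x ∈ ball (0 : ℝ) (|c| ^ n * r), d x = 0 := by
    intro n
    induction n with
    | zero => simpa using h0
    | succ n ih =>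
      rw [pow_succ', mul_assoc]
      exact eq_zero_on_ball_mul_of_hasDerivAt hc0 hd ih
  funext x
  obtain ⟨n, hn⟩ := pow_unbounded_of_one_lt (|x| / r) hc
  refine hball n x ?_
  rw [mem_ball_zero_iff, Real.norm_eq_abs, ← div_lt_iff₀ hr]
  exact hn

theorem solutions_equal_of_eq_near_zero (f g : ℝ → ℝ) (hf : Continuous f) (hg : Continuous g)
    (heqf : ∀ X : ℝ, (∫ x in (0 : ℝ)..X, f x) + f 0 = f (X / 2))
    (heqg : ∀ X : ℝ, (∫ x in (0 : ℝ)..X, g x) + g 0 = g (X / 2))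
    (hloc : ∃ ε : ℝ, 0 < ε ∧ ∀ x ∈ Set.Ioo (-ε) ε, f x = g x) :
    f = g := by
  obtain ⟨ε, hε, hloc⟩ := hloc
  have hfg0 : f 0 = g 0 := hloc 0 ⟨neg_lt_zero.2 hε, hε⟩
  have hself : ∀ y, (f - g) y = ∫ t in (0 : ℝ)..2 * y, (f - g) t := by
    intro y
    have hf' := heqf (2 * y)
    have hg' := heqg (2 * y)
    rw [mul_div_cancel_left₀ y two_ne_zero] at hf' hg'
    simp only [Pi.sub_apply]
    rw [intervalIntegral.integral_sub (hf.intervalIntegrable _ _) (hg.intervalIntegrable _ _)]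
    linarith
  have hball : ∀ x ∈ ball (0 : ℝ) ε, (f - g) x = 0 := by
    intro x hx
    rw [Real.ball_eq_Ioo, zero_sub, zero_add] at hx
    exact sub_eq_zero.2 (hloc x hx)
  refine sub_eq_zero.1 (eq_zero_of_hasDerivAt_of_eq_zero_on_ball (c := 2) ?_ hε
    (hasDerivAt_of_eq_integral_mul (hf.sub hg) hself) hball)
  norm_num
end
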